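/- With the construction from a semiregular divisible difference set as above, for any i ≠ ĩ and any j, j̃, |⟨e^i_j, e^ĩ_j̃⟩| = √(k−λ₁)/k, and trace(L_i* L_ĩ L_ĩ* L_i) = m²(k−λ₁)/k², where L_i has columns {e^i_j}_{j=1}^m. -/

import Mathlib

/-!
The Gram entry `⟨e^i_j, e^i'_j'⟩` equals `k⁻¹ ψ(D)` for the character
`ψ = (χᵢ ηⱼ)⁻¹ χᵢ' ηⱼ'`, which is nontrivial on `N` because `χᵢ` and `χᵢ'` represent different
cosets of `N^⊥`. Expanding `|ψ(D)|² = ∑_{a,b ∈ D} ψ(a - b)` and grouping pairs by their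
difference, the off-diagonal counts are `λ₂ + (λ₁ - λ₂)·1_N - λ₁·δ₀`; as `ψ` sums to zero over
both `G` and `N`, this leaves `|ψ(D)|² = k - λ₁`. The trace is the squared Frobenius norm of
`Lᵢ* Lᵢ'`, a sum of `m²` such squared entries.
-/

open Finset Matrix ComplexConjugate

section

variable {G : Type*} [AddCommGroup G]

lemma AddChar.sum_mem_eq_zero [Fintype G] {R : Type*} [CommRing R] [IsDomain R] {ψ : AddChar G R}
    {N : AddSubgroup G} [DecidablePred (· ∈ N)] (hψ : ∃ h ∈ N, ψ h ≠ 1) :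
    ∑ g with g ∈ N, ψ g = 0 := by
  obtain ⟨h, hN, hψh⟩ := hψ
  rw [sum_subtype _ fun _ ↦ mem_filter_univ _]
  exact sum_eq_zero_of_ne_one (ψ := ψ.compAddMonoidHom N.subtype) (ne_one_iff.2 ⟨⟨h, hN⟩, hψh⟩)

lemma AddChar.sum_mul_conj_sum [Finite G] {K : Type*} [RCLike K] (ψ : AddChar G K) (s : Finset G) :
    (∑ g ∈ s, ψ g) * conj (∑ g ∈ s, ψ g) = ∑ p ∈ s ×ˢ s, ψ (p.1 - p.2) := by
  simp only [map_sum, sum_mul_sum, sum_product, ← map_neg_eq_conj, ← map_add_eq_mul, sub_eq_add_neg]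

lemma AddChar.exists_apply_ne_one_of_ne {ι κ M : Type*} [CommMonoid M] {N : AddSubgroup G}
    {η : κ → AddChar G M} (hη : ∀ φ : AddChar G M, (∀ h ∈ N, φ h = 1) → ∃ j, η j = φ)
    (hηN : ∀ j, ∀ h ∈ N, η j h = 1) {χ : ι → AddChar G M}
    (hχ : ∀ ψ : AddChar G M, ∃! i, ∃ j, ψ = χ i * η j) {i i' : ι} (hii' : i ≠ i') (j j' : κ) :
    ∃ h ∈ N, ((χ i * η j)⁻¹ * (χ i' * η j')) h ≠ 1 := by
  by_contra! htriv
  obtain ⟨j₂, hj₂⟩ := hη (η j * ((χ i * η j)⁻¹ * (χ i' * η j'))) fun h hh ↦ by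
    rw [AddChar.mul_apply, hηN j h hh, htriv h hh, mul_one]
  have hsame : χ i' * η j' = χ i * η j₂ := by
    rw [hj₂]
    group
  obtain ⟨i₀, -, huniq⟩ := hχ (χ i' * η j')
  exact hii' ((huniq i ⟨j₂, hsame⟩).trans (huniq i' ⟨j', rfl⟩).symm)

lemma AddChar.sum_conj_mul_eq [Finite G] {ι : Type*} [Fintype ι] {D : Finset G} (d : ι ≃ D)
    {c : ℝ} (hc : 0 ≤ c) (φ φ' : AddChar G ℂ) :
    ∑ t, conj ((√c : ℂ)⁻¹ * φ (d t)) * ((√c : ℂ)⁻¹ * φ' (d t)) =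
      (c : ℂ)⁻¹ * ∑ g ∈ D, (φ⁻¹ * φ') g := by
  have hsq : conj (√c : ℂ)⁻¹ * (√c : ℂ)⁻¹ = (c : ℂ)⁻¹ := by
    rw [map_inv₀, Complex.conj_ofReal, ← mul_inv, ← Complex.ofReal_mul, Real.mul_self_sqrt hc]
  rw [← sum_coe_sort D, ← Equiv.sum_comp d, mul_sum]
  refine sum_congr rfl fun t _ ↦ ?_
  rw [map_mul, ← map_neg_eq_conj, mul_apply, inv_apply, ← hsq]
  ring

lemma Matrix.trace_mul_conjTranspose_eq_sum_norm_sq {m n K : Type*} [Fintype m] [Fintype n]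
    [RCLike K] (B : Matrix m n K) :
    (B * Bᴴ).trace = ∑ i, ∑ j, ((‖B i j‖ ^ 2 : ℝ) : K) := by
  simp [trace, mul_apply, RCLike.mul_conj]

variable [DecidableEq G]

def diffCount (D : Finset G) (g : G) : ℕ := #{p ∈ D ×ˢ D | p.1 ≠ p.2 ∧ p.1 - p.2 = g}

lemma diffCount_zero (D : Finset G) : diffCount D 0 = 0 := by
  simp [diffCount, sub_eq_zero]

lemma sum_product_sub_eq_diffCount [Fintype G] {M : Type*} [AddCommMonoid M] (D : Finset G)
    (f : G → M) :
    ∑ p ∈ D ×ˢ D, f (p.1 - p.2) = #D • f 0 + ∑ g, diffCount D g • f g := by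
  rw [← sum_filter_add_sum_filter_not (D ×ˢ D) (fun p ↦ p.1 = p.2), ← diag_eq_filter]
  congr 1
  · rw [sum_congr rfl fun p hp ↦ by rw [sub_eq_zero.2 (mem_diag.1 hp).2], sum_const, diag_card]
  · rw [← sum_fiberwise _ (fun p ↦ p.1 - p.2)]
    refine sum_congr rfl fun g _ ↦ ?_
    rw [filter_filter, sum_congr rfl fun p hp ↦ by rw [(mem_filter.1 hp).2.2], sum_const]
    rfl

section DivisibleDifferenceSet

variable {N : AddSubgroup G} [DecidablePred (· ∈ N)] {D : Finset G} {l1 l2 : ℕ}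

lemma cast_diffCount_eq {R : Type*} [CommRing R] (hdd1 : ∀ g ∈ N, g ≠ 0 → diffCount D g = l1)
    (hdd2 : ∀ g ∉ N, diffCount D g = l2) (g : G) :
    (diffCount D g : R) =
      l2 + (l1 - l2) * (if g ∈ N then 1 else 0) - l1 * (if g = 0 then 1 else 0) := by
  by_cases h0 : g = 0
  · simp [h0, diffCount_zero]
  by_cases hN : g ∈ N
  · simp [h0, hN, hdd1 g hN h0]
  · simp [h0, hN, hdd2 g hN]

lemma norm_sq_sum_addChar [Fintype G] (hdd1 : ∀ g ∈ N, g ≠ 0 → diffCount D g = l1)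
    (hdd2 : ∀ g ∉ N, diffCount D g = l2) {ψ : AddChar G ℂ} (hψ : ∃ h ∈ N, ψ h ≠ 1) :
    ‖∑ g ∈ D, ψ g‖ ^ 2 = #D - l1 := by
  have hψ1 : ψ ≠ 1 := by
    rintro rfl
    simp at hψ
  have hweighted : ∑ g, (diffCount D g : ℂ) * ψ g =
      l2 * ∑ g, ψ g + (l1 - l2) * ∑ g with g ∈ N, ψ g - l1 * ψ 0 := by
    simp only [cast_diffCount_eq hdd1 hdd2, add_mul, sub_mul, sum_add_distrib, sum_sub_distrib,
      mul_assoc, ← mul_sum, ite_mul, one_mul, zero_mul, sum_ite_eq', sum_filter, mem_univ, if_true]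
  have hcomplex : ((‖∑ g ∈ D, ψ g‖ ^ 2 : ℝ) : ℂ) = #D - l1 := by
    rw [Complex.ofReal_pow, ← Complex.mul_conj', AddChar.sum_mul_conj_sum,
      sum_product_sub_eq_diffCount]
    simp only [nsmul_eq_mul, hweighted, AddChar.sum_eq_zero_of_ne_one hψ1,
      AddChar.sum_mem_eq_zero hψ, AddChar.map_zero_eq_one]
    ring
  exact_mod_cast hcomplex

end DivisibleDifferenceSet

end

open Matrix in
theorem semiregular_dds_cross_terms_general {G : Type*} [AddCommGroup G] [Fintype G]
    [DecidableEq G] (m n k l1 l2 : ℕ)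
    (N : AddSubgroup G)
    (D : Finset G) (hD : D.card = k)
    (hdd2 : ∀ g : G, g ∉ N →
        ((D ×ˢ D).filter (fun p => p.1 ≠ p.2 ∧ p.1 - p.2 = g)).card = l2)
    (hdd1 : ∀ g : G, g ∈ N → g ≠ 0 →
        ((D ×ˢ D).filter (fun p => p.1 ≠ p.2 ∧ p.1 - p.2 = g)).card = l1)
    (η : Fin m ≃ {χ : AddChar G ℂ // ∀ h ∈ N, χ h = 1})
    (χ : Fin n → AddChar G ℂ)
    (hχ : ∀ ψ : AddChar G ℂ, ∃! i : Fin n, ∃ j : Fin m, ψ = χ i * (η j).1)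
    (d : Fin k ≃ {x // x ∈ D})
    (E : Fin n → Matrix (Fin k) (Fin m) ℂ)
    (hE : ∀ i t j, E i t j = ((Real.sqrt k : ℂ))⁻¹ * (χ i * (η j).1) ((d t : G))) :
    ∀ i i' : Fin n, i ≠ i' →
      (∀ j j' : Fin m,
        ‖∑ t, (starRingEnd ℂ) (E i t j) * E i' t j'‖ =
          Real.sqrt ((k : ℝ) - l1) / (k : ℝ)) ∧
      ((E i)ᴴ * E i' * (E i')ᴴ * E i).trace =
        (((m : ℝ) ^ 2 * ((k : ℝ) - l1) / (k : ℝ) ^ 2 : ℝ) : ℂ) := by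
  classical
  intro i i' hii'
  have hnorm_sq (j j' : Fin m) :
      ‖∑ t, conj (E i t j) * E i' t j'‖ ^ 2 = ((k : ℝ) - l1) / (k : ℝ) ^ 2 := by
    have hψ := AddChar.exists_apply_ne_one_of_ne (fun φ hφ ↦ ⟨η.symm ⟨φ, hφ⟩, by simp⟩)
      (fun j ↦ (η j).2) hχ hii' j j'
    simp only [hE, AddChar.sum_conj_mul_eq d k.cast_nonneg, norm_mul, mul_pow, norm_inv,
      Complex.norm_real, Real.norm_natCast, norm_sq_sum_addChar hdd1 hdd2 hψ, hD]
    ring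
  have hnorm (j j' : Fin m) :
      ‖∑ t, conj (E i t j) * E i' t j'‖ = √((k : ℝ) - l1) / k := by
    rw [← Real.sqrt_sq (norm_nonneg _), hnorm_sq, Real.sqrt_div' _ (sq_nonneg _),
      Real.sqrt_sq k.cast_nonneg]
  refine ⟨hnorm, ?_⟩
  rw [show (E i)ᴴ * E i' * (E i')ᴴ * E i = ((E i)ᴴ * E i') * ((E i)ᴴ * E i')ᴴ by
      simp only [conjTranspose_mul, conjTranspose_conjTranspose, Matrix.mul_assoc],
    trace_mul_conjTranspose_eq_sum_norm_sq]
  simp only [mul_apply, conjTranspose_apply, RCLike.star_def, hnorm_sq, sum_const, card_univ,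
    Fintype.card_fin, nsmul_eq_mul]
  push_cast
  ring

open Matrix in
/-- In the semiregular divisible difference set construction, cross inner products of
basis vectors from distinct subspaces all have modulus `√(k-λ₁)/k`, and
`trace(Lᵢ* Lĩ Lĩ* Lᵢ) = m²(k-λ₁)/k²`. -/
theorem semiregular_dds_cross_terms {G : Type*} [AddCommGroup G] [Fintype G]
    [DecidableEq G] (m n k l1 l2 : ℕ) (hm : 0 < m) (hn : 0 < n) (hk : 0 < k)
    (N : AddSubgroup G) (hG : Fintype.card G = m * n) (hNcard : Nat.card N = n)
    (D : Finset G) (hD : D.card = k)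
    (hdd2 : ∀ g : G, g ∉ N →
        ((D ×ˢ D).filter (fun p => p.1 ≠ p.2 ∧ p.1 - p.2 = g)).card = l2)
    (hdd1 : ∀ g : G, g ∈ N → g ≠ 0 →
        ((D ×ˢ D).filter (fun p => p.1 ≠ p.2 ∧ p.1 - p.2 = g)).card = l1)
    (hsr1 : l1 < k) (hsr2 : k ^ 2 = l2 * (m * n))
    (η : Fin m ≃ {χ : AddChar G ℂ // ∀ h ∈ N, χ h = 1})
    (χ : Fin n → AddChar G ℂ)
    (hχ : ∀ ψ : AddChar G ℂ, ∃! i : Fin n, ∃ j : Fin m, ψ = χ i * (η j).1)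
    (d : Fin k ≃ {x // x ∈ D})
    (E : Fin n → Matrix (Fin k) (Fin m) ℂ)
    (hE : ∀ i t j, E i t j = ((Real.sqrt k : ℂ))⁻¹ * (χ i * (η j).1) ((d t : G))) :
    ∀ i i' : Fin n, i ≠ i' →
      (∀ j j' : Fin m,
        ‖∑ t, (starRingEnd ℂ) (E i t j) * E i' t j'‖ =
          Real.sqrt ((k : ℝ) - l1) / (k : ℝ)) ∧
      ((E i)ᴴ * E i' * (E i')ᴴ * E i).trace =
        (((m : ℝ) ^ 2 * ((k : ℝ) - l1) / (k : ℝ) ^ 2 : ℝ) : ℂ) :=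
  semiregular_dds_cross_terms_general m n k l1 l2 N D hD hdd2 hdd1 η χ hχ d E hE
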